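/- Let P₄ be the path with vertices a, b, c, d and edges ab, bc, cd, so A(P₄) = ⟨a,b,c,d ∣ [a,b], [b,c], [c,d]⟩. Then the elements bc and d generate a free subgroup of rank 2 of A(P₄); that is, the homomorphism from the free group F₂ on two generators to A(P₄) sending the first generator to bc and the second generator to d is injective. -/

import Mathlib

open scoped commutatorElement

/-- The defining relators of the right-angled Artin group on a simple graph `G`:
the commutators of the generators corresponding to adjacent vertices. -/
def raagRels {V : Type*} (G : SimpleGraph V) : Set (FreeGroup V) :=
  {r | ∃ u v : V, G.Adj u v ∧ r = ⁅FreeGroup.of u, FreeGroup.of v⁆}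

/-- The right-angled Artin group on a simple graph `G`. -/
abbrev RAAG {V : Type*} (G : SimpleGraph V) : Type _ := PresentedGroup (raagRels G)

/-- The generator of the right-angled Artin group corresponding to a vertex. -/
def gen {V : Type*} (G : SimpleGraph V) (v : V) : RAAG G := PresentedGroup.of v

/-- Vertices of the path P₄. -/
inductive VP : Type | a | b | c | d
deriving DecidableEq

/-- The path graph P₄ with edges ab, bc, cd. -/
def P4 : SimpleGraph VP := SimpleGraph.fromRel (fun u v => (u, v) ∈
  ([(.a,.b),(.b,.c),(.c,.d)] : List (VP × VP)))

/-! Every edge of `P₄` contains `a` or `c`, so killing `a` and `c` while sending `b` and `d` to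
the free generators of `F₂` defines a retraction `A(P₄) → F₂`. It maps `bc ↦ x₀` and `d ↦ x₁`,
hence is a left inverse of `F₂ → A(P₄)`, which is therefore injective. -/

namespace RAAG

variable {V : Type*} {G : SimpleGraph V} {H : Type*} [Group H]

theorem lift_rels {f : V → H} (hf : ∀ u v, G.Adj u v → Commute (f u) (f v)) :
    ∀ r ∈ raagRels G, FreeGroup.lift f r = 1 := by
  rintro r ⟨u, v, hadj, rfl⟩
  rw [map_commutatorElement, FreeGroup.lift_apply_of, FreeGroup.lift_apply_of,
    commutatorElement_eq_one_iff_commute]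
  exact hf u v hadj

def lift (f : V → H) (hf : ∀ u v, G.Adj u v → Commute (f u) (f v)) : RAAG G →* H :=
  PresentedGroup.toGroup (lift_rels hf)

@[simp]
theorem lift_gen (f : V → H) (hf : ∀ u v, G.Adj u v → Commute (f u) (f v)) (v : V) :
    lift f hf (gen G v) = f v :=
  PresentedGroup.toGroup.of (lift_rels hf)

end RAAG

def p4RetractionGen : VP → FreeGroup (Fin 2)
  | .a => 1
  | .b => FreeGroup.of 0
  | .c => 1
  | .d => FreeGroup.of 1

theorem p4RetractionGen_commute_of_adj :
    ∀ u v, P4.Adj u v → Commute (p4RetractionGen u) (p4RetractionGen v) := by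
  intro u v huv
  cases u <;> cases v <;> simp_all [P4, p4RetractionGen]

def p4Retraction : RAAG P4 →* FreeGroup (Fin 2) :=
  RAAG.lift p4RetractionGen p4RetractionGen_commute_of_adj

theorem p4Retraction_comp_lift_bc_d :
    p4Retraction.comp (FreeGroup.lift ![gen P4 VP.b * gen P4 VP.c, gen P4 VP.d]) =
      MonoidHom.id (FreeGroup (Fin 2)) := by
  refine FreeGroup.ext_hom _ _ fun i => ?_
  fin_cases i <;> simp [p4Retraction, p4RetractionGen]

/-- The elements `bc` and `d` generate a free subgroup of rank 2 in `A(P₄)`: the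
homomorphism `F₂ → A(P₄)` sending the first generator to `bc` and the second to `d` is
injective. -/
theorem bc_d_generate_free_group :
    Function.Injective
      (FreeGroup.lift ![gen P4 VP.b * gen P4 VP.c, gen P4 VP.d] :
        FreeGroup (Fin 2) →* RAAG P4) :=
  Function.LeftInverse.injective (g := p4Retraction)
    (DFunLike.congr_fun p4Retraction_comp_lift_bc_d)
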